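/- arXiv:1504.06454 — 2 statements merged into one kernel-verified Lean document; each statement's English description precedes it below -/
import Mathlib

section
/- For every finite threshold tolerance graph G=(V,E) there exist a finite tree T, an assignment w of nonnegative real weights to the edges of T, an injection mapping each vertex of V to a leaf of T, and a real number k, such that for all distinct u,v ∈ V, {u,v} ∈ E if and only if d_T(u,v) ≥ k, where d_T(u,v) is the sum of the weights of the edges on the unique path in T between the leaves corresponding to u and v. (The mLPG-membership statement actually established by the proof of Theorem 3.) -/
/-!
Sort the vertices by tolerance, `t₁ ≤ ⋯ ≤ tₘ`, and hang the `i`-th vertex as a leaf off the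
`i`-th vertex of a path. With heights `hᵢ = tᵢ / 2`, weight the spine edge between `i - 1` and `i`
by `hᵢ - hᵢ₋₁` and the `i`-th leaf edge by `gᵢ + M - hᵢ`, where `M ≥ max t`. For `i < j` the
leaf-to-leaf distance is then `gᵢ + gⱼ + 2M - tᵢ = gᵢ + gⱼ + 2M - min tᵢ tⱼ`, so adjacency is
exactly distance `≥ 2M`.
-/

/-- `G` is a threshold tolerance graph: each vertex gets a positive weight `g v` and a
positive tolerance `t v`, and two distinct vertices are adjacent iff the sum of their
weights is at least the minimum of their tolerances. -/
def IsThresholdToleranceGraph {V : Type} [Fintype V] (G : SimpleGraph V) : Prop :=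
  ∃ g t : V → ℝ,
    (∀ v, 0 < g v) ∧ (∀ v, 0 < t v) ∧
    ∀ x y : V, x ≠ y →
      (G.Adj x y ↔ min (t x) (t y) ≤ g x + g y)

open SimpleGraph

namespace SimpleGraph

/-- Rotated to start at its largest vertex, a cycle would leave it towards two distinct
smaller neighbours. -/
theorem isAcyclic_of_lower_adj_unique {α : Type*} [LinearOrder α] {G : SimpleGraph α}
    (h : ∀ ⦃x y z⦄, G.Adj x y → G.Adj x z → y < x → z < x → y = z) : G.IsAcyclic := by
  intro u c hc
  obtain ⟨v, hv, hmax⟩ := c.support.toFinset.exists_max_image id ⟨u, by simp⟩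
  rw [List.mem_toFinset] at hv
  have hcycle : (c.rotate v hv).IsCycle := hc.rotate hv
  have hle : ∀ x ∈ (c.rotate v hv).support, x ≤ v := fun x hx => hmax x (by simpa using hx)
  generalize c.rotate v hv = d at hcycle hle
  cases d with
  | nil => exact hcycle.not_nil Walk.Nil.nil
  | @cons _ y _ hvy p =>
    rw [Walk.cons_isCycle_iff] at hcycle
    have hp : ¬ p.Nil := Walk.not_nil_of_ne hvy.ne.symm
    have hz := p.adj_penultimate hp
    have hyz : y = p.penultimate :=
      h hvy hz.symm (lt_of_le_of_ne (hle y (by simp)) hvy.ne.symm)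
        (lt_of_le_of_ne (hle _ (by simp [p.getVert_mem_support])) hz.ne)
    have hlast := p.mk_penultimate_end_mem_edges hp
    rw [← hyz, Sym2.eq_swap] at hlast
    exact hcycle.2 hlast

theorem connected_of_exists_lower_adj {α : Type*} [PartialOrder α] [OrderBot α]
    [WellFoundedLT α] {G : SimpleGraph α} (h : ∀ x, x ≠ ⊥ → ∃ y < x, G.Adj x y) :
    G.Connected := by
  refine (connected_iff_exists_forall_reachable G).2 ⟨⊥, fun x => ?_⟩
  induction x using WellFoundedLT.induction with
  | _ x ih =>
    rcases eq_or_ne x ⊥ with rfl | hx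
    · rfl
    · obtain ⟨y, hyx, hxy⟩ := h x hx
      exact (ih y hyx).trans hxy.symm.reachable

theorem IsAcyclic.exists_isPath_and_iff {V : Type*} {G : SimpleGraph V} (hG : G.IsAcyclic)
    {a b : V} {q : G.Walk a b} (hq : q.IsPath) (P : G.Walk a b → Prop) :
    (∃ p : G.Walk a b, p.IsPath ∧ P p) ↔ P q := by
  refine ⟨fun ⟨p, hp, hP⟩ => ?_, fun hP => ⟨q, hq, hP⟩⟩
  obtain rfl : p = q := congrArg Subtype.val ((hG.subsingleton_path a b).elim ⟨p, hp⟩ ⟨q, hq⟩)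
  exact hP

end SimpleGraph

theorem exists_equiv_fin_monotone {V β : Type*} [Fintype V] [LinearOrder β] (t : V → β) :
    ∃ e : V ≃ Fin (Fintype.card V), Monotone (t ∘ e.symm) :=
  ⟨(Fintype.equivFin V).trans (Tuple.sort (t ∘ (Fintype.equivFin V).symm)).symm,
    by simpa [Function.comp_def] using Tuple.monotone_sort (t ∘ (Fintype.equivFin V).symm)⟩

namespace Equiv

variable {V β : Type*} {m : ℕ}

def natExtend (e : V ≃ Fin m) (φ : V → β) (c : β) (n : ℕ) : β :=
  if h : n < m then φ (e.symm ⟨n, h⟩) else c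

@[simp]
theorem natExtend_apply_coe (e : V ≃ Fin m) (φ : V → β) (c : β) (v : V) :
    e.natExtend φ c (e v) = φ v := by
  simp [natExtend]

theorem monotone_natExtend [Preorder β] {e : V ≃ Fin m} {φ : V → β} {c : β}
    (hφ : Monotone (φ ∘ e.symm)) (hc : ∀ v, φ v ≤ c) : Monotone (e.natExtend φ c) := by
  intro i j hij
  unfold natExtend
  split_ifs with hi hj hj
  · exact hφ (Fin.mk_le_mk.2 hij)
  · exact hc _
  · omega
  · rfl

theorem natExtend_nonneg [Zero β] [LE β] {e : V ≃ Fin m} {φ : V → β} {c : β}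
    (hφ : ∀ v, 0 ≤ φ v) (hc : 0 ≤ c) (n : ℕ) : 0 ≤ e.natExtend φ c n := by
  unfold natExtend
  split_ifs
  exacts [hφ _, hc]

end Equiv

namespace Caterpillar

variable {m : ℕ}

/-- Spine `0, 1, …, m`, with the leaf `m + 1 + i` hanging off the spine vertex `i < m`. -/
def graph (m : ℕ) : SimpleGraph (Fin (2 * m + 1)) :=
  fromRel fun x y => (x : ℕ) = y + 1 ∧ (x : ℕ) ≤ m ∨ (x : ℕ) = y + m + 1

theorem graph_adj {x y : Fin (2 * m + 1)} :
    (graph m).Adj x y ↔ (x : ℕ) = y + 1 ∧ (x : ℕ) ≤ m ∨ (x : ℕ) = y + m + 1 ∨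
      (y : ℕ) = x + 1 ∧ (y : ℕ) ≤ m ∨ (y : ℕ) = x + m + 1 := by
  simp only [graph, fromRel_adj, ne_eq, Fin.ext_iff]
  omega

def leaf (i : Fin m) : Fin (2 * m + 1) := ⟨m + 1 + i, by omega⟩

theorem leaf_injective : Function.Injective (leaf (m := m)) := fun i j h =>
  Fin.ext (by simpa [leaf] using congrArg Fin.val h)

/-- An edge is weighted through its upper endpoint `x`: a spine edge by `H x - H (x - 1)`,
the edge to the leaf `m + 1 + i` by `A i`. -/
noncomputable def weight (A H : ℕ → ℝ) (e : Sym2 (Fin (2 * m + 1))) : ℝ :=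
  if (e.sup : ℕ) ≤ m then H e.sup - H (e.sup - 1) else A (e.sup - (m + 1))

theorem weight_nonneg {A H : ℕ → ℝ} (hA : ∀ i, 0 ≤ A i) (hH : Monotone H)
    (e : Sym2 (Fin (2 * m + 1))) : 0 ≤ weight A H e := by
  unfold weight
  split_ifs
  · exact sub_nonneg.2 (hH (Nat.sub_le _ _))
  · exact hA _

theorem weight_spine (A H : ℕ → ℝ) {x y : Fin (2 * m + 1)} (hxy : (y : ℕ) = x + 1)
    (hy : (y : ℕ) ≤ m) : weight A H s(x, y) = H y - H x := by
  have hsup : s(x, y).sup = y :=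
    (Sym2.sup_mk x y).trans (sup_eq_right.2 (Fin.le_def.2 (by omega)))
  rw [weight, hsup, if_pos hy, hxy, Nat.add_sub_cancel]

theorem weight_leaf (A H : ℕ → ℝ) (x : Fin (2 * m + 1)) (hx : (x : ℕ) ≤ m) (i : Fin m) :
    weight A H s(x, leaf i) = A i := by
  have hsup : s(x, leaf i).sup = leaf i :=
    (Sym2.sup_mk _ _).trans (sup_eq_right.2 (Fin.le_def.2 (by simp only [leaf]; omega)))
  rw [weight, hsup, if_neg (by simp only [leaf]; omega)]
  simp [leaf]

theorem existsUnique_adj_leaf (i : Fin m) : ∃! x, (graph m).Adj (leaf i) x := by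
  refine ⟨⟨i, by omega⟩, ?_, fun x hx => ?_⟩
  · simp only [graph_adj, leaf]
    omega
  · simp only [graph_adj, leaf] at hx
    ext
    simp only
    omega

theorem exists_isPath_spine (A H : ℕ → ℝ) {x y : Fin (2 * m + 1)} (hxy : (x : ℕ) ≤ y)
    (hy : (y : ℕ) ≤ m) :
    ∃ p : (graph m).Walk x y, p.IsPath ∧ (∀ z ∈ p.support, (z : ℕ) ≤ y) ∧
      (p.edges.map (weight A H)).sum = H y - H x := by
  obtain ⟨d, hd⟩ := Nat.exists_eq_add_of_le hxy
  induction d generalizing y with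
  | zero =>
    obtain rfl : x = y := Fin.ext hd.symm
    exact ⟨.nil, by simp, by simp, by simp⟩
  | succ d ih =>
    let y' : Fin (2 * m + 1) := ⟨x + d, by omega⟩
    obtain ⟨p, hp, hle, hsum⟩ := ih (y := y') (by simp [y']) (by simp [y']; omega) rfl
    have hadj : (graph m).Adj y' y := by simp only [graph_adj, y']; omega
    have hy_notMem : y ∉ p.support := fun hy' => by
      have : (y : ℕ) ≤ x + d := hle y hy'
      omega
    refine ⟨p.concat hadj, hp.concat hy_notMem hadj, fun z hz => ?_, ?_⟩
    · rw [Walk.support_concat, List.mem_append, List.mem_singleton] at hz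
      rcases hz with hz | rfl
      · have : (z : ℕ) ≤ x + d := hle z hz
        omega
      · rfl
    · rw [Walk.edges_concat, List.concat_eq_append, List.map_append, List.sum_append, hsum]
      simp [weight_spine A H (show (y : ℕ) = y' + 1 by simp [y']; omega) hy]

theorem exists_isPath_leaf_leaf_of_lt (A H : ℕ → ℝ) {i j : Fin m} (hij : i < j) :
    ∃ p : (graph m).Walk (leaf i) (leaf j), p.IsPath ∧
      (p.edges.map (weight A H)).sum = A i + A j + H j - H i := by
  let x : Fin (2 * m + 1) := ⟨i, by omega⟩
  let y : Fin (2 * m + 1) := ⟨j, by omega⟩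
  obtain ⟨p, hp, hle, hsum⟩ :=
    exists_isPath_spine A H (x := x) (y := y) (by simpa [x, y] using hij.le)
      (by simp only [y]; omega)
  have hx : (graph m).Adj (leaf i) x := by simp only [graph_adj, leaf, x]; omega
  have hy : (graph m).Adj y (leaf j) := by simp only [graph_adj, leaf, y]; omega
  have hleaf : ∀ k, leaf k ∉ p.support := fun k hk => by
    have := hle _ hk; simp only [leaf, y] at this; omega
  refine ⟨.cons hx (p.concat hy), ?_, ?_⟩
  · rw [Walk.cons_isPath_iff, Walk.support_concat, List.mem_append, List.mem_singleton]
    refine ⟨hp.concat (hleaf j) hy, ?_⟩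
    rintro (h | h)
    · exact hleaf i h
    · exact hij.ne (leaf_injective h)
  · rw [Walk.edges_cons, Walk.edges_concat, Sym2.eq_swap]
    simp only [List.map_cons, List.sum_cons, List.concat_eq_append, List.map_append,
      List.sum_append, List.map_nil, List.sum_nil, hsum,
      weight_leaf A H x (by simp [x]), weight_leaf A H y (by simp [y])]
    simp only [x, y]
    ring

theorem exists_isPath_leaf_leaf (A : ℕ → ℝ) {H : ℕ → ℝ} (hH : Monotone H) {i j : Fin m}
    (hij : i ≠ j) :
    ∃ p : (graph m).Walk (leaf i) (leaf j), p.IsPath ∧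
      (p.edges.map (weight A H)).sum = A i + A j + H i + H j - 2 * min (H i) (H j) := by
  wlog hlt : i < j generalizing i j
  · obtain ⟨p, hp, hsum⟩ := this hij.symm (lt_of_le_of_ne (not_lt.1 hlt) hij.symm)
    refine ⟨p.reverse, hp.reverse, ?_⟩
    rw [Walk.edges_reverse, List.map_reverse, List.sum_reverse, hsum, min_comm]
    ring
  obtain ⟨p, hp, hsum⟩ := exists_isPath_leaf_leaf_of_lt A H hlt
  refine ⟨p, hp, ?_⟩
  rw [hsum, min_eq_left (hH (Fin.le_def.1 hlt.le))]
  ring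

theorem isAcyclic (m : ℕ) : (graph m).IsAcyclic :=
  isAcyclic_of_lower_adj_unique fun x y z hy hz hyx hzx => by
    rw [graph_adj] at hy hz
    rw [Fin.lt_def] at hyx hzx
    exact Fin.ext (by omega)

theorem connected (m : ℕ) : (graph m).Connected :=
  connected_of_exists_lower_adj fun x hx => by
    have hx0 : (x : ℕ) ≠ 0 := fun h => hx (by rw [bot_eq_zero]; exact Fin.ext h)
    by_cases hxm : (x : ℕ) ≤ m
    · exact ⟨⟨x - 1, by omega⟩, Fin.lt_def.2 (show (x : ℕ) - 1 < x by omega),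
        by simp only [graph_adj]; omega⟩
    · exact ⟨⟨x - (m + 1), by omega⟩, Fin.lt_def.2 (show (x : ℕ) - (m + 1) < x by omega),
        by simp only [graph_adj]; omega⟩

end Caterpillar

/-- For every finite threshold tolerance graph there are a finite tree with nonnegative
edge weights, an injection of the vertices into the leaves, and a threshold `k` such
that two distinct vertices are adjacent iff the weighted tree-distance of the
corresponding leaves is at least `k` (membership in mLPG). -/
theorem thresholdTolerance_mLPG {V : Type} [Fintype V] (G : SimpleGraph V)
    (hG : IsThresholdToleranceGraph G) :
    ∃ (n : ℕ) (T : SimpleGraph (Fin n)) (w : Sym2 (Fin n) → ℝ)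
        (f : V → Fin n) (k : ℝ),
      T.Connected ∧ T.IsAcyclic ∧
      (∀ e ∈ T.edgeSet, 0 ≤ w e) ∧
      Function.Injective f ∧
      (∀ v : V, ∃! x : Fin n, T.Adj (f v) x) ∧
      ∀ u v : V, u ≠ v →
        (G.Adj u v ↔ ∃ p : T.Walk (f u) (f v), p.IsPath ∧ k ≤ (p.edges.map w).sum) := by
  obtain ⟨g, t, hg, ht, hadj⟩ := hG
  obtain ⟨e, he⟩ := exists_equiv_fin_monotone t
  set M := ∑ v, t v
  have htM : ∀ v, t v ≤ M := fun v =>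
    Finset.single_le_sum (fun w _ => (ht w).le) (Finset.mem_univ v)
  set H := e.natExtend (fun v => t v / 2) (M / 2)
  set A := e.natExtend (fun v => g v + M - t v / 2) 0
  have hH : Monotone H := Equiv.monotone_natExtend
    (fun i j hij => div_le_div_of_nonneg_right (he hij) zero_le_two) fun v => by linarith [htM v]
  have hA : ∀ n, 0 ≤ A n :=
    Equiv.natExtend_nonneg (fun v => by linarith [hg v, ht v, htM v]) le_rfl
  refine ⟨_, Caterpillar.graph _, Caterpillar.weight A H, fun v => Caterpillar.leaf (e v), 2 * M,
    Caterpillar.connected _, Caterpillar.isAcyclic _, fun x _ => Caterpillar.weight_nonneg hA hH x,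
    Caterpillar.leaf_injective.comp e.injective, fun v => Caterpillar.existsUnique_adj_leaf (e v),
    fun u v huv => ?_⟩
  obtain ⟨p, hp, hsum⟩ := Caterpillar.exists_isPath_leaf_leaf A hH (e.injective.ne huv)
  rw [(Caterpillar.isAcyclic _).exists_isPath_and_iff hp, hsum, hadj u v huv]
  simp only [A, H, Equiv.natExtend_apply_coe, min_div_div_right (zero_le_two (α := ℝ))]
  constructor <;> intro <;> linarith
end

section
/- Let G=(V,E) be a finite simple graph with functions g,t : V → ℕ taking only positive integer values such that for all distinct x,y ∈ V, {x,y} ∈ E iff g(x)+g(y) ≥ min(t(x),t(y)), and let K = max_{v∈V} t(v). Let T be the caterpillar whose spine consists of vertices x_1, …, x_K joined in a path with each spine edge of weight 1/2, and which has one leaf l_v for each v ∈ V attached to spine vertex x_{t(v)} by an edge of weight g(v) + (K − t(v))/2. Then for all distinct u,v ∈ V, the weighted distance in T between l_u and l_v equals g(u) + g(v) + K − min(t(u), t(v)); consequently this distance is always at least 2, and it is at least K if and only if {u,v} ∈ E. (The key computation in the proof of Theorem 3.) -/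
open Classical

/-- The caterpillar with spine `x_1, …, x_K` (represented as `Sum.inl i` for
`i : Fin K`, with `x_{i+1}` corresponding to `Sum.inl i`) joined in a path, and one
leaf `l_v = Sum.inr v` for each `v : V`, attached to the spine vertex `x_{t v}`. -/
def caterpillar (K : ℕ) (V : Type) (t : V → ℕ) : SimpleGraph (Fin K ⊕ V) :=
  SimpleGraph.fromRel (fun a b =>
    (∃ i j : Fin K, a = Sum.inl i ∧ b = Sum.inl j ∧ (j : ℕ) = (i : ℕ) + 1) ∨
    (∃ (i : Fin K) (v : V), a = Sum.inl i ∧ b = Sum.inr v ∧ (i : ℕ) + 1 = t v))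

/-- The edge weights of the caterpillar: every spine edge gets weight `1/2`, and the
edge attaching the leaf `l_v` gets weight `g v + (K - t v) / 2`.  (Edges between two
leaves do not occur in the caterpillar, so the value chosen there is irrelevant.) -/
noncomputable def caterpillarWeight (K : ℕ) (V : Type) (g t : V → ℕ) :
    Sym2 (Fin K ⊕ V) → ℝ := fun e =>
  if hv : ∃ v : V, Sum.inr v ∈ e then
    (g hv.choose : ℝ) + ((K : ℝ) - (t hv.choose : ℝ)) / 2
  else 1 / 2

/-!
A leaf `l_v` has the single neighbour `x_{t v}`, and a path along the spine cannot turn back,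
so a path between two leaves `l_u`, `l_v` consists of the two leaf edges and the spine segment
between `x_{t u}` and `x_{t v}`, of weight `|t u - t v| / 2`. Together with the leaf weights this
gives `g u + g v + K - min (t u) (t v)`; the two consequences then follow from `1 ≤ g`,
`t ≤ K` and the adjacency rule of `G`.
-/

open SimpleGraph

section

variable {K : ℕ} {V : Type} {t : V → ℕ}

theorem caterpillar_adj_inl_inl {i j : Fin K} :
    (caterpillar K V t).Adj (.inl i) (.inl j) ↔ (j : ℕ) = i + 1 ∨ (i : ℕ) = j + 1 := by
  simp only [caterpillar, fromRel_adj, ne_eq, Sum.inl.injEq, exists_and_left, exists_eq_left',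
    reduceCtorEq, false_and, exists_false, and_false, or_false, and_iff_right_iff_imp]
  rintro h rfl
  omega

theorem caterpillar_adj_inl_inr {i : Fin K} {v : V} :
    (caterpillar K V t).Adj (.inl i) (.inr v) ↔ (i : ℕ) + 1 = t v := by
  simp [caterpillar]

theorem caterpillar_not_adj_inr_inr {u v : V} : ¬ (caterpillar K V t).Adj (.inr u) (.inr v) := by
  simp [caterpillar]

theorem caterpillarWeight_inl_inl (g : V → ℕ) (i j : Fin K) :
    caterpillarWeight K V g t s(.inl i, .inl j) = 1 / 2 := by
  simp [caterpillarWeight]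

theorem caterpillarWeight_inl_inr (g : V → ℕ) (i : Fin K) (v : V) :
    caterpillarWeight K V g t s(.inl i, .inr v) = g v + ((K : ℝ) - t v) / 2 := by
  simp [caterpillarWeight]

-- The support clause is what keeps a path from turning back along the spine.
theorem caterpillar_weight_of_isPath_inl_inr (g : V → ℕ) {v : V} (hv : 0 < t v) {a : Fin K}
    (p : (caterpillar K V t).Walk (.inl a) (.inr v)) (hp : p.IsPath) :
    (p.edges.map (caterpillarWeight K V g t)).sum
        = (Nat.dist (a + 1) (t v) : ℝ) / 2 + (g v + ((K : ℝ) - t v) / 2) ∧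
      ∀ j : Fin K, min (a : ℕ) (t v - 1) ≤ j → (j : ℕ) ≤ max (a : ℕ) (t v - 1) →
        .inl j ∈ p.support := by
  generalize hx : (Sum.inl a : Fin K ⊕ V) = x at p hp
  generalize hy : (Sum.inr v : Fin K ⊕ V) = y at p hp
  induction p generalizing a with
  | nil => cases hx.trans hy.symm
  | cons h q ih =>
    subst hx hy
    rw [Walk.cons_isPath_iff] at hp
    rename_i b
    cases b with
    | inr w =>
      have hw : (a : ℕ) + 1 = t w := caterpillar_adj_inl_inr.mp h
      cases q with
      | nil =>
        refine ⟨?_, fun j hj₁ hj₂ => ?_⟩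
        · simp [caterpillarWeight_inl_inr, ← hw]
        · obtain rfl : j = a := Fin.ext (by omega)
          simp
      | cons h' q' =>
        rename_i c
        cases c with
        | inl a' =>
          obtain rfl : a' = a := Fin.ext (by have := caterpillar_adj_inl_inr.mp h'.symm; omega)
          exact absurd (by simp) hp.2
        | inr _ => exact absurd h' caterpillar_not_adj_inr_inr
    | inl a' =>
      obtain ⟨hsum, hsupp⟩ := ih rfl rfl hp.1
      have hstep := caterpillar_adj_inl_inl.mp h
      have ha : ¬ (min (a' : ℕ) (t v - 1) ≤ a ∧ (a : ℕ) ≤ max (a' : ℕ) (t v - 1)) :=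
        fun ha => hp.2 (hsupp a ha.1 ha.2)
      have hdist : Nat.dist (a + 1) (t v) = Nat.dist (a' + 1) (t v) + 1 := by
        unfold Nat.dist; omega
      refine ⟨?_, fun j hj₁ hj₂ => ?_⟩
      · rw [Walk.edges_cons, List.map_cons, List.sum_cons, caterpillarWeight_inl_inl, hsum, hdist]
        push_cast
        ring
      · rw [Walk.support_cons, List.mem_cons]
        by_cases hja : (j : ℕ) = a
        · exact .inl (congrArg _ (Fin.ext hja))
        · exact .inr (hsupp j (by omega) (by omega))

theorem caterpillar_reachable_inl_inl (i j : Fin K) :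
    (caterpillar K V t).Reachable (.inl i) (.inl j) := by
  have hzero (k : Fin K) : (caterpillar K V t).Reachable (.inl ⟨0, k.pos⟩) (.inl k) := by
    obtain ⟨n, hn⟩ := k
    induction n with
    | zero => rfl
    | succ n ih =>
      exact (ih (by omega)).trans (caterpillar_adj_inl_inl.mpr (.inl rfl)).reachable
  exact (hzero i).symm.trans (hzero j)

theorem caterpillar_reachable_inr_inr {u v : V} (hu : 0 < t u) (hv : 0 < t v)
    (huK : t u ≤ K) (hvK : t v ≤ K) : (caterpillar K V t).Reachable (.inr u) (.inr v) := by
  have hleaf (w : V) (hw : 0 < t w) (hwK : t w ≤ K) :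
      (caterpillar K V t).Reachable (.inl ⟨t w - 1, by omega⟩) (.inr w) :=
    (caterpillar_adj_inl_inr.mpr (by simp only; omega)).reachable
  exact (hleaf u hu huK).symm.trans
    ((caterpillar_reachable_inl_inl _ _).trans (hleaf v hv hvK))

theorem caterpillar_weight_of_isPath_inr_inr (g : V → ℕ) {u v : V} (hv : 0 < t v)
    (huv : u ≠ v) (p : (caterpillar K V t).Walk (.inr u) (.inr v)) (hp : p.IsPath) :
    (p.edges.map (caterpillarWeight K V g t)).sum
      = g u + g v + K - (min (t u) (t v) : ℕ) := by
  cases p with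
  | nil => exact absurd rfl huv
  | cons h q =>
    rename_i b
    cases b with
    | inr w => exact absurd h caterpillar_not_adj_inr_inr
    | inl a =>
      have ha : (a : ℕ) + 1 = t u := caterpillar_adj_inl_inr.mp h.symm
      obtain ⟨hsum, -⟩ :=
        caterpillar_weight_of_isPath_inl_inr g hv q ((Walk.cons_isPath_iff h q).mp hp).1
      rw [Walk.edges_cons, List.map_cons, List.sum_cons, hsum, Sym2.eq_swap,
        caterpillarWeight_inl_inr, ha]
      have hdist : Nat.dist (t u) (t v) + 2 * min (t u) (t v) = t u + t v := by
        unfold Nat.dist; omega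
      have hdist' : ((Nat.dist (t u) (t v) + 2 * min (t u) (t v) : ℕ) : ℝ) = t u + t v := by
        exact_mod_cast hdist
      push_cast at hdist' ⊢
      linarith

end

theorem caterpillar_leaf_dist_general {V : Type} (G : SimpleGraph V)
    (g t : V → ℕ) (K : ℕ)
    (hg : ∀ v, 0 < g v) (ht : ∀ v, 0 < t v)
    (hKub : ∀ v, t v ≤ K)
    (hadj : ∀ x y : V, x ≠ y → (G.Adj x y ↔ min (t x) (t y) ≤ g x + g y)) :
    ∀ u v : V, u ≠ v →
      (∃ p : (caterpillar K V t).Walk (Sum.inr u) (Sum.inr v), p.IsPath) ∧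
      ∀ p : (caterpillar K V t).Walk (Sum.inr u) (Sum.inr v), p.IsPath →
        (p.edges.map (caterpillarWeight K V g t)).sum =
            (g u : ℝ) + (g v : ℝ) + (K : ℝ) - (min (t u) (t v) : ℕ) ∧
        2 ≤ (p.edges.map (caterpillarWeight K V g t)).sum ∧
        ((K : ℝ) ≤ (p.edges.map (caterpillarWeight K V g t)).sum ↔ G.Adj u v) := by
  intro u v huv
  refine ⟨(caterpillar_reachable_inr_inr (ht u) (ht v) (hKub u) (hKub v)).exists_isPath,
    fun p hp => ?_⟩
  have hmin : ((min (t u) (t v) : ℕ) : ℝ) ≤ K := by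
    exact_mod_cast (min_le_left _ _).trans (hKub u)
  have hgu : (1 : ℝ) ≤ g u := by exact_mod_cast hg u
  have hgv : (1 : ℝ) ≤ g v := by exact_mod_cast hg v
  rw [caterpillar_weight_of_isPath_inr_inr g (ht v) huv p hp, hadj u v huv, ← @Nat.cast_le ℝ]
  push_cast at hmin ⊢
  exact ⟨rfl, by linarith, ⟨fun h => by linarith, fun h => by linarith⟩⟩

/-- The key computation in the proof of Theorem 3: in the caterpillar, the weighted
distance between the leaves `l_u` and `l_v` equals `g u + g v + K - min (t u) (t v)`;
consequently it is at least `2`, and it is at least `K` iff `u` and `v` are adjacent. -/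
theorem caterpillar_leaf_dist {V : Type} [Fintype V] (G : SimpleGraph V)
    (g t : V → ℕ) (K : ℕ)
    (hg : ∀ v, 0 < g v) (ht : ∀ v, 0 < t v)
    (hKub : ∀ v, t v ≤ K) (hKmax : ∃ v, t v = K)
    (hadj : ∀ x y : V, x ≠ y → (G.Adj x y ↔ min (t x) (t y) ≤ g x + g y)) :
    ∀ u v : V, u ≠ v →
      (∃ p : (caterpillar K V t).Walk (Sum.inr u) (Sum.inr v), p.IsPath) ∧
      ∀ p : (caterpillar K V t).Walk (Sum.inr u) (Sum.inr v), p.IsPath →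
        (p.edges.map (caterpillarWeight K V g t)).sum =
            (g u : ℝ) + (g v : ℝ) + (K : ℝ) - (min (t u) (t v) : ℕ) ∧
        2 ≤ (p.edges.map (caterpillarWeight K V g t)).sum ∧
        ((K : ℝ) ≤ (p.edges.map (caterpillarWeight K V g t)).sum ↔ G.Adj u v) :=
  caterpillar_leaf_dist_general G g t K hg ht hKub hadj
end
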